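/- arXiv:1810.08546 — 4 statements merged into one kernel-verified Lean document; each statement's English description precedes it below -/
import Mathlib

section
/- Let R be a commutative ring in which 2 is invertible and let L be a self-dual quadratic lattice over R with quadratic form q. Let H be a free Cl(L)-bimodule of rank 1, and embed L into End(H) via left multiplication. Equip End(H) with the bilinear form (α,β) := 2^{-rank L}·tr(α∘β). Then the embedding L ↪ End(H) is an isometry with respect to q and (−,−). -/
/-!
STATEMENT 0: Let `R` be a commutative ring in which 2 is invertible and `L` a self-dual
quadratic lattice (finite free `R`-module with quadratic form `Q` whose associated bilinear
form induces an isomorphism onto the dual).  Taking `H := Cl(L)` (the free `Cl(L)`-bimodule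
of rank one), `L` embeds into `End(H)` by left Clifford multiplication, and equipping
`End(H)` with the bilinear form `(α, β) ↦ 2^{-rank L} · tr (α ∘ β)`, this embedding is an
isometry with respect to `Q` and `(−,−)`.
-/

open CliffordAlgebra

section Aux

open Module
open scoped TensorProduct
set_option synthInstance.maxHeartbeats 1000000
set_option maxHeartbeats 1000000

variable {R : Type*} [CommRing R]

/-- Any linear equivalence is an isometry of zero quadratic forms. -/
noncomputable def zeroIsoEquiv {M N : Type*} [AddCommGroup M] [AddCommGroup N]
    [Module R M] [Module R N] (e : M ≃ₗ[R] N) :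
    (0 : QuadraticForm R M).IsometryEquiv (0 : QuadraticForm R N) :=
  { e with map_app' := fun _ => rfl }

/-- Equal quadratic forms are isometric via the identity. -/
noncomputable def isometryOfEq {M : Type*} [AddCommGroup M] [Module R M]
    {Q₁ Q₂ : QuadraticForm R M} (h : Q₁ = Q₂) : Q₁.IsometryEquiv Q₂ :=
  { LinearEquiv.refl R M with map_app' := fun m => by rw [h]; rfl }

noncomputable def dualNumberProd : DualNumber R ≃ₗ[R] (R × R) :=
  LinearEquiv.refl R (R × R)

noncomputable def piSuccEquiv (n : ℕ) : (Fin (n+1) → R) ≃ₗ[R] R × (Fin n → R) :=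
  { (Fin.consEquiv (fun _ : Fin (n+1) => R)).symm with
    map_add' := fun _ _ => rfl
    map_smul' := fun _ _ => rfl }

noncomputable def clDualEquiv : CliffordAlgebra (0 : QuadraticForm R R) ≃ₗ[R] (R × R) :=
  CliffordAlgebraDualNumber.equiv.toLinearEquiv.trans dualNumberProd

noncomputable def clSuccEquiv (n : ℕ) :
    CliffordAlgebra (0 : QuadraticForm R (Fin (n+1) → R)) ≃ₗ[R]
      (CliffordAlgebra (0 : QuadraticForm R R)) ⊗[R]
        (CliffordAlgebra (0 : QuadraticForm R (Fin n → R))) :=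
  ((CliffordAlgebra.equivOfIsometry (zeroIsoEquiv (piSuccEquiv n))).trans
    ((CliffordAlgebra.equivOfIsometry (isometryOfEq (by ext ⟨x, y⟩; simp))).trans
      (CliffordAlgebra.prodEquiv (0 : QuadraticForm R R)
        (0 : QuadraticForm R (Fin n → R))))).toLinearEquiv.trans
    (GradedTensorProduct.of R _ _).symm

noncomputable def zeroUnitEquiv : (Fin 0 → R) ≃ₗ[R] Unit where
  toFun _ := ()
  invFun _ := 0
  left_inv _ := Subsingleton.elim _ _
  right_inv _ := Subsingleton.elim _ _
  map_add' _ _ := Subsingleton.elim _ _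
  map_smul' _ _ := Subsingleton.elim _ _

noncomputable def clZeroEquiv :
    CliffordAlgebra (0 : QuadraticForm R (Fin 0 → R)) ≃ₗ[R] R :=
  ((CliffordAlgebra.equivOfIsometry (zeroIsoEquiv zeroUnitEquiv)).trans
    CliffordAlgebraRing.equiv).toLinearEquiv

/-- The Clifford (= exterior) algebra of the zero form on `R^n` is free of rank `2 ^ n`. -/
lemma cl_free_finrank [Nontrivial R] (n : ℕ) :
    Module.Free R (CliffordAlgebra (0 : QuadraticForm R (Fin n → R))) ∧
    Module.Finite R (CliffordAlgebra (0 : QuadraticForm R (Fin n → R))) ∧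
    Module.finrank R (CliffordAlgebra (0 : QuadraticForm R (Fin n → R))) = 2 ^ n := by
  induction n with
  | zero =>
    refine ⟨Module.Free.of_equiv clZeroEquiv.symm, Module.Finite.equiv clZeroEquiv.symm, ?_⟩
    rw [clZeroEquiv.finrank_eq, finrank_self, pow_zero]
  | succ n ih =>
    obtain ⟨h1, h2, h3⟩ := ih
    have f1 : Module.Free R (CliffordAlgebra (0 : QuadraticForm R R)) :=
      Module.Free.of_equiv clDualEquiv.symm
    have fin1 : Module.Finite R (CliffordAlgebra (0 : QuadraticForm R R)) :=
      Module.Finite.equiv clDualEquiv.symm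
    have e := clSuccEquiv (R := R) n
    refine ⟨Module.Free.of_equiv e.symm, Module.Finite.equiv e.symm, ?_⟩
    rw [e.finrank_eq, Module.finrank_tensorProduct, h3, clDualEquiv.finrank_eq,
      Module.finrank_prod, finrank_self, pow_succ]
    ring

end Aux

theorem clifford_left_mul_isometry
    (R : Type*) [CommRing R] [Invertible (2 : R)]
    (L : Type*) [AddCommGroup L] [Module R L] [Module.Free R L] [Module.Finite R L]
    (Q : QuadraticForm R L)
    -- self-duality: the associated bilinear form induces an isomorphism `L ≅ L^∨`
    (hself : Function.Bijective fun (x : L) =>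
      ((QuadraticMap.associated (R := R) Q x : L →ₗ[R] R))) :
    ∀ v : L,
      (⅟(2 : R)) ^ (Module.finrank R L) *
        LinearMap.trace R (CliffordAlgebra Q)
          ((LinearMap.mulLeft R (CliffordAlgebra.ι Q v)).comp
            (LinearMap.mulLeft R (CliffordAlgebra.ι Q v)))
      = Q v := by
  intro v
  rcases subsingleton_or_nontrivial R with hR | hR
  · exact Subsingleton.elim _ _
  set n := Module.finrank R L with hn
  have E : CliffordAlgebra Q ≃ₗ[R] CliffordAlgebra (0 : QuadraticForm R (Fin n → R)) :=
    (CliffordAlgebra.equivExterior Q).trans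
      (CliffordAlgebra.equivOfIsometry
        (zeroIsoEquiv (Module.finBasis R L).equivFun)).toLinearEquiv
  obtain ⟨h1, h2, h3⟩ := cl_free_finrank (R := R) n
  haveI : Module.Free R (CliffordAlgebra Q) := Module.Free.of_equiv E.symm
  haveI : Module.Finite R (CliffordAlgebra Q) := Module.Finite.equiv E.symm
  have hfr : Module.finrank R (CliffordAlgebra Q) = 2 ^ n := by rw [E.finrank_eq, h3]
  have hcomp : (LinearMap.mulLeft R (CliffordAlgebra.ι Q v)).comp
      (LinearMap.mulLeft R (CliffordAlgebra.ι Q v)) = Q v • LinearMap.id := by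
    ext x
    show CliffordAlgebra.ι Q v * (CliffordAlgebra.ι Q v * x) = (Q v • LinearMap.id) x
    rw [LinearMap.smul_apply, LinearMap.id_apply, ← mul_assoc,
      CliffordAlgebra.ι_sq_scalar, Algebra.smul_def]
  rw [hcomp, map_smul, LinearMap.trace_id, hfr, smul_eq_mul]
  push_cast
  have h2n : (⅟(2:R)) ^ n * (2:R) ^ n = 1 := by
    rw [← mul_pow, invOf_mul_self, one_pow]
  calc (⅟(2:R)) ^ n * (Q v * (2:R) ^ n)
      = Q v * ((⅟(2:R)) ^ n * (2:R) ^ n) := by ring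
    _ = Q v := by rw [h2n, mul_one]
end

section
/- Let k be a perfect field of characteristic p > 0 and let (D, φ) be a K3 crystal over k: D is a finitely generated self-dual quadratic lattice over W(k) with a σ-linear injection φ : D → D satisfying p²D ⊂ φ(D), rank(φ ⊗ k) = 1, and ⟨φ(x), φ(y)⟩ = p²σ(⟨x,y⟩) for all x, y ∈ D. Define Fil²_φ(D/pD) := (φ^{-1}(p²D) mod p). Then Fil²_φ(D/pD) is an isotropic subspace of D/pD of dimension 1 over k. -/
/-!
STATEMENT 4: Let `k` be a perfect field of characteristic `p > 0` and `(D, φ)` a K3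
crystal over `k`: `D` is a finitely generated self-dual quadratic lattice over `W(k)` with
a `σ`-linear injection `φ : D → D` such that `p²D ⊆ φ(D)`, `rank(φ ⊗ k) = 1`, and
`⟨φx, φy⟩ = p²·σ⟨x,y⟩`.  Define `Fil²_φ(D/pD) := (φ⁻¹(p²D) mod p)`.  Then
`Fil²_φ(D/pD)` is an isotropic subspace of `D/pD` of dimension 1 over `k`.

The subspace `Fil²_φ(D/pD)` of `D/pD` is described without forming the quotient:
"dimension 1" means there is `d ∈ φ⁻¹(p²D)` with `d ∉ pD` such that every element of
`φ⁻¹(p²D)` is congruent mod `pD` to a `W(k)`-multiple of `d`, and "isotropic" means the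
pairing of any two elements of `φ⁻¹(p²D)` is divisible by `p`.
-/

theorem K3crystal_Fil2_isotropic_one_dimensional
    (p : ℕ) [Fact p.Prime]
    (k : Type*) [Field k] [CharP k p] [PerfectRing k p]
    (D : Type*) [AddCommGroup D] [Module (WittVector p k) D]
    [Module.Finite (WittVector p k) D] [Module.Free (WittVector p k) D]
    -- the symmetric bilinear pairing, self-dual
    (B : D →ₗ[WittVector p k] D →ₗ[WittVector p k] WittVector p k)
    (hsymm : ∀ x y, B x y = B y x)
    (hself : Function.Bijective fun x : D => B x)
    -- the σ-linear injection φ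
    (φ : D →+ D)
    (hφσ : ∀ (c : WittVector p k) (x : D), φ (c • x) = WittVector.frobenius c • φ x)
    (hφinj : Function.Injective φ)
    -- p²D ⊆ φ(D)
    (hp2 : ∀ x : D, ∃ y : D, φ y = ((p : WittVector p k))^2 • x)
    -- rank (φ ⊗ k) = 1
    (hrank : ∃ x₀ : D, ¬ (∃ y, φ x₀ = (p : WittVector p k) • y) ∧
      ∀ x : D, ∃ c : WittVector p k, ∃ y : D,
        φ x - c • φ x₀ = (p : WittVector p k) • y)
    -- ⟨φx, φy⟩ = p² σ⟨x, y⟩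
    (hpair : ∀ x y : D, B (φ x) (φ y) = ((p : WittVector p k))^2 * WittVector.frobenius (B x y)) :
    -- Fil²_φ(D/pD) = (φ⁻¹(p²D) mod p) is a one-dimensional isotropic subspace of D/pD:
    (∃ d : D, (∃ z : D, φ d = ((p : WittVector p k))^2 • z) ∧
      ¬ (∃ y, d = (p : WittVector p k) • y) ∧
      ∀ x : D, (∃ z : D, φ x = ((p : WittVector p k))^2 • z) →
        ∃ c : WittVector p k, ∃ y : D, x - c • d = (p : WittVector p k) • y) ∧
    (∀ x y : D, (∃ z, φ x = ((p : WittVector p k))^2 • z) →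
      (∃ z, φ y = ((p : WittVector p k))^2 • z) →
      ∃ c : WittVector p k, B x y = (p : WittVector p k) * c) := by
  classical
  obtain ⟨x₀, hx₀, hspan⟩ := hrank
  have hp0 : (p : WittVector p k) ≠ 0 := WittVector.p_nonzero p k
  have hp20 : ((p : WittVector p k))^2 ≠ 0 := pow_ne_zero _ hp0
  set σ' := (WittVector.frobeniusEquiv p k).symm with hσ'def
  have hσ' : ∀ a, σ' (WittVector.frobenius a) = a := fun a => by
    have := (WittVector.frobeniusEquiv p k).symm_apply_apply a
    exact this
  have hσ'' : ∀ a, WittVector.frobenius (σ' a) = a := fun a => by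
    have := (WittVector.frobeniusEquiv p k).apply_symm_apply a
    exact this
  -- Lemma N : nondegeneracy of B mod p, from self-duality
  have lemN : ∀ v : D, (∀ x : D, ∃ t, B x v = (p : WittVector p k) * t) →
      ∃ u, v = (p : WittVector p k) • u := by
    intro v h
    choose t ht using h
    let f : D →ₗ[WittVector p k] WittVector p k :=
      { toFun := t
        map_add' := fun y z => by
          apply mul_left_cancel₀ hp0
          rw [← ht, map_add, LinearMap.add_apply, ht, ht, mul_add]
        map_smul' := fun a y => by
          apply mul_left_cancel₀ hp0
          rw [← ht, map_smul, LinearMap.smul_apply, smul_eq_mul, ht]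
          simp only [RingHom.id_apply, smul_eq_mul]
          ring }
    obtain ⟨u, hu⟩ := hself.2 f
    refine ⟨u, hself.1 (LinearMap.ext fun y => ?_)⟩
    have h1 : B u y = t y := LinearMap.congr_fun hu y
    have h2 : B ((p : WittVector p k) • u) y = (p : WittVector p k) * B u y := by
      rw [map_smul, LinearMap.smul_apply, smul_eq_mul]
    rw [h2, h1, hsymm v y, ht]
  -- transfer of divisibility along frobenius
  have σdvd : ∀ a : WittVector p k,
      (∃ t, WittVector.frobenius a = (p : WittVector p k) * t) →
      ∃ t, a = (p : WittVector p k) * t := by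
    rintro a ⟨t, h⟩
    refine ⟨σ' t, ?_⟩
    have h2 := congrArg σ' h
    rwa [hσ' a, map_mul, map_natCast] at h2
  -- adjunction: B (φ x) y = σ (B x w) whenever φ w = p² • y
  have hadj : ∀ (x y w : D), φ w = ((p : WittVector p k))^2 • y →
      B (φ x) y = WittVector.frobenius (B x w) := by
    intro x y w hw
    have h1 : B (φ x) (φ w) = ((p : WittVector p k))^2 * WittVector.frobenius (B x w) :=
      hpair x w
    rw [hw, map_smul, smul_eq_mul] at h1
    exact mul_left_cancel₀ hp20 h1
  -- key ⟸ direction : if B (φ x₀) y ∈ pW and φ w = p² • y then w ∈ pD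
  have key : ∀ (y w : D), φ w = ((p : WittVector p k))^2 • y →
      (∃ t, B (φ x₀) y = (p : WittVector p k) * t) →
      ∃ u, w = (p : WittVector p k) • u := by
    rintro y w hw ⟨t, ht⟩
    apply lemN w
    intro x
    apply σdvd
    rw [← hadj x y w hw]
    obtain ⟨c, z, hcz⟩ := hspan x
    have hφx : φ x = (p : WittVector p k) • z + c • φ x₀ := by
      rw [← hcz]; abel
    refine ⟨B z y + c * t, ?_⟩
    rw [hφx, map_add, map_smul, map_smul, LinearMap.add_apply, LinearMap.smul_apply,
      LinearMap.smul_apply, smul_eq_mul, smul_eq_mul, ht]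
    ring
  -- existence of y₁ with B (φ x₀) y₁ not divisible by p
  have hy₁ : ∃ y₁ : D, ¬ ∃ t, B (φ x₀) y₁ = (p : WittVector p k) * t := by
    by_contra h
    push_neg at h
    refine hx₀ ?_
    apply lemN (φ x₀)
    intro x
    obtain ⟨t, ht⟩ := h x
    exact ⟨t, by rw [hsymm]; exact ht⟩
  obtain ⟨y₁, hy₁⟩ := hy₁
  -- B (φ x₀) y₁ is a unit
  have ht₁unit : IsUnit (B (φ x₀) y₁) := by
    have hne : B (φ x₀) y₁ ≠ 0 := fun h => hy₁ ⟨0, by rw [h, mul_zero]⟩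
    obtain ⟨m, b, hb⟩ := WittVector.exists_eq_pow_p_mul' _ hne
    cases m with
    | zero => rw [hb, pow_zero, one_mul]; exact b.isUnit
    | succ m =>
        exact absurd ⟨(p : WittVector p k)^m * b, by rw [hb, pow_succ]; ring⟩ hy₁
  obtain ⟨v₁, hv₁⟩ := ht₁unit
  obtain ⟨d, hd⟩ := hp2 y₁
  constructor
  · refine ⟨d, ⟨y₁, hd⟩, ?_, ?_⟩
    · rintro ⟨u, hu⟩
      apply hy₁
      have h1 : B (φ x₀) y₁ = WittVector.frobenius (B x₀ d) := hadj x₀ y₁ d hd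
      rw [hu, map_smul, smul_eq_mul] at h1
      refine ⟨WittVector.frobenius (B x₀ u), ?_⟩
      rw [h1, map_mul, map_natCast]
    · rintro x ⟨z, hz⟩
      set t := B (φ x₀) z with htdef
      set c := σ' (t * (↑v₁⁻¹ : WittVector p k)) with hcdef
      refine ⟨c, ?_⟩
      have hφw : φ (x - c • d) =
          ((p : WittVector p k))^2 • (z - (t * (↑v₁⁻¹ : WittVector p k)) • y₁) := by
        rw [map_sub, hφσ, hz, hd, hσ'', smul_comm, smul_sub]
      have hBy' : B (φ x₀) (z - (t * (↑v₁⁻¹ : WittVector p k)) • y₁) = (p : WittVector p k) * 0 := by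
        rw [map_sub, map_smul, smul_eq_mul, ← htdef, ← hv₁, mul_zero]
        have : (↑v₁⁻¹ : WittVector p k) * ↑v₁ = 1 := v₁.inv_mul
        rw [mul_assoc, this, mul_one, sub_self]
      exact key _ _ hφw ⟨0, hBy'⟩
  · rintro x y ⟨z, hz⟩ ⟨w, hw⟩
    have h1 : B (φ x) (φ y) = ((p : WittVector p k))^2 * WittVector.frobenius (B x y) :=
      hpair x y
    rw [hz, hw] at h1
    simp only [map_smul, LinearMap.smul_apply, smul_eq_mul, ← mul_assoc] at h1
    have h2 : WittVector.frobenius (B x y) = ((p : WittVector p k))^2 * B z w := by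
      have h1' : ((p : WittVector p k))^2 * (((p : WittVector p k))^2 * B z w) =
          ((p : WittVector p k))^2 * WittVector.frobenius (B x y) := by
        rw [← h1]; ring
      exact (mul_left_cancel₀ hp20 h1').symm
    refine ⟨(p : WittVector p k) * σ' (B z w), ?_⟩
    have h3 := congrArg σ' h2
    rw [hσ', map_mul, map_pow, map_natCast] at h3
    rw [h3]; ring
end

section
/- Let X and X' be supersingular K3 surfaces over an algebraically closed field k of odd characteristic p, and let f : X ⇝ X' be an isogeny (a correspondence inducing isometries on ℓ-adic cohomology for ℓ ≠ p and on rational crystalline cohomology). Assume f is Z-integral (the induced isometries preserve the Z_ℓ- and W(k)-integral structures) and polarizable (there is an ample class ξ ∈ NS(X')_Q with f^*(ξ) ample). Then, granting Ogus's crystalline Torelli theorem and the integrality of Chern class maps for supersingular K3 surfaces, f is induced by an isomorphism X ≅ X'. -/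
/-!
STATEMENT 13: Let `X, X'` be supersingular K3 surfaces over an algebraically closed field
of odd characteristic `p` and `f : X ⇝ X'` a `ℤ`-integral polarizable isogeny.  Granting
Ogus's crystalline Torelli theorem and the integrality of the Chern class maps for
supersingular K3 surfaces, `f` is induced by an isomorphism `X ≅ X'`.

By the granted Chern-class integrality, a `ℤ`-integral isogeny *is* an isometry
`M = f^* : NS(X') → NS(X)` of the rank-22 Néron–Severi lattices (modelled by Gram matrices
`J, J'`), and "induced by an isomorphism" is the predicate `inducedByIso` appearing in
the granted crystalline Torelli theorem (`hOgus`): an isometry carrying the ample cone of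
`X'` onto the ample cone of `X` is induced by an isomorphism.  The ample cones are
connected components of the positive cone minus the `(-2)`-walls (sets `V_X`, `V_{X'}`),
and polarizability of `f` means some ample `ℚ`-class `ξ` of `X'` has `f^*ξ` ample.
-/

open Matrix

/-- Change of variables for a bilinear pairing under an isometry of Gram matrices. -/
private lemma pair_aux {n : ℕ} {R : Type*} [CommRing R]
    (P Q A : Matrix (Fin n) (Fin n) R) (h : Aᵀ * P * A = Q) (x y : Fin n → R) :
    (A *ᵥ x) ⬝ᵥ (P *ᵥ (A *ᵥ y)) = x ⬝ᵥ (Q *ᵥ y) := by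
  conv_rhs => rw [← h, ← Matrix.mulVec_mulVec, ← Matrix.mulVec_mulVec,
    Matrix.dotProduct_mulVec, Matrix.vecMul_transpose]

/-- Casting an integral `mulVec` to `ℝ`. -/
private lemma cast_mulVec {n : ℕ} (N : Matrix (Fin n) (Fin n) ℤ) (γ : Fin n → ℤ) :
    (fun i => ((N *ᵥ γ) i : ℝ)) = (N.map (Int.cast : ℤ → ℝ)) *ᵥ (fun i => ((γ i : ℝ))) := by
  funext i
  exact RingHom.map_mulVec (Int.castRingHom ℝ) N γ i

private lemma map_mul_int {n : ℕ} (P Q : Matrix (Fin n) (Fin n) ℤ) :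
    (P * Q).map (Int.cast : ℤ → ℝ) = P.map (Int.cast : ℤ → ℝ) * Q.map (Int.cast : ℤ → ℝ) := by
  simpa using Matrix.map_mul (L := P) (M := Q) (f := Int.castRingHom ℝ)

theorem crystalline_torelli_via_isogenies
    (p : ℕ) (hp : p.Prime) (hodd : p ≠ 2)
    -- Gram matrices of NS(X) and NS(X') (supersingular ⇒ rank 22)
    (J J' : Matrix (Fin 22) (Fin 22) ℤ) (hJsymm : J.IsSymm) (hJ'symm : J'.IsSymm)
    -- ample cones of X and X' inside NS ⊗ ℝ, as components of the positive cone minus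
    -- the (-2)-walls
    (Amp Amp' : Set (Fin 22 → ℝ))
    (hAmp : ∀ x₀ ∈ Amp, Amp = connectedComponentIn
      {x : Fin 22 → ℝ | 0 < x ⬝ᵥ (J.map (Int.cast : ℤ → ℝ)).mulVec x ∧
        ∀ β : Fin 22 → ℤ, β ⬝ᵥ J.mulVec β = -2 →
          x ⬝ᵥ (J.map (Int.cast : ℤ → ℝ)).mulVec (fun i => (β i : ℝ)) ≠ 0} x₀)
    (hAmp' : ∀ x₀ ∈ Amp', Amp' = connectedComponentIn
      {x : Fin 22 → ℝ | 0 < x ⬝ᵥ (J'.map (Int.cast : ℤ → ℝ)).mulVec x ∧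
        ∀ β : Fin 22 → ℤ, β ⬝ᵥ J'.mulVec β = -2 →
          x ⬝ᵥ (J'.map (Int.cast : ℤ → ℝ)).mulVec (fun i => (β i : ℝ)) ≠ 0} x₀)
    (hAmpNe : Amp.Nonempty) (hAmp'Ne : Amp'.Nonempty)
    -- the predicate "is induced by an isomorphism X ≅ X'" (granted, with Ogus's
    -- crystalline Torelli theorem below)
    (inducedByIso : Matrix (Fin 22) (Fin 22) ℤ → Prop)
    -- Ogus's crystalline Torelli theorem: an isometry NS(X') → NS(X) carrying the ample
    -- cone of X' onto the ample cone of X is induced by an isomorphism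
    (hOgus : ∀ N : Matrix (Fin 22) (Fin 22) ℤ, IsUnit N.det → Nᵀ * J * N = J' →
      (fun x : Fin 22 → ℝ => (N.map (Int.cast : ℤ → ℝ)).mulVec x) '' Amp' = Amp →
      inducedByIso N)
    -- the ℤ-integral isogeny: an integral isometry M = f^* : NS(X') → NS(X)
    (M : Matrix (Fin 22) (Fin 22) ℤ) (hMdet : IsUnit M.det) (hMisom : Mᵀ * J * M = J')
    -- polarizability: there is an ample ℚ-class ξ on X' with f^*ξ ample
    (hpol : ∃ ξ : Fin 22 → ℚ,
      (fun i => ((ξ i : ℝ))) ∈ Amp' ∧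
      (fun i => (((M.map (Int.cast : ℤ → ℚ)).mulVec ξ) i : ℝ)) ∈ Amp) :
    inducedByIso M := by
  classical
  obtain ⟨ξ, hξ', hξ⟩ := hpol
  set A := M.map (Int.cast : ℤ → ℝ) with hAdef
  set N := M⁻¹ with hNdef
  have hNM : N * M = 1 := Matrix.nonsing_inv_mul M hMdet
  have hMN : M * N = 1 := Matrix.mul_nonsing_inv M hMdet
  set B := N.map (Int.cast : ℤ → ℝ) with hBdef
  have hBA : B * A = 1 := by
    rw [hBdef, hAdef, ← map_mul_int, hNM, Matrix.map_one _ Int.cast_zero Int.cast_one]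
  have hAB : A * B = 1 := by
    rw [hBdef, hAdef, ← map_mul_int, hMN, Matrix.map_one _ Int.cast_zero Int.cast_one]
  set JR := J.map (Int.cast : ℤ → ℝ) with hJRdef
  set J'R := J'.map (Int.cast : ℤ → ℝ) with hJ'Rdef
  have hIsoR : Aᵀ * JR * A = J'R := by
    rw [hAdef, hJRdef, hJ'Rdef, ← Matrix.transpose_map, ← map_mul_int, ← map_mul_int, hMisom]
  set V : Set (Fin 22 → ℝ) :=
    {x : Fin 22 → ℝ | 0 < x ⬝ᵥ JR.mulVec x ∧
      ∀ β : Fin 22 → ℤ, β ⬝ᵥ J.mulVec β = -2 →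
        x ⬝ᵥ JR.mulVec (fun i => (β i : ℝ)) ≠ 0} with hVdef
  set V' : Set (Fin 22 → ℝ) :=
    {x : Fin 22 → ℝ | 0 < x ⬝ᵥ J'R.mulVec x ∧
      ∀ β : Fin 22 → ℤ, β ⬝ᵥ J'.mulVec β = -2 →
        x ⬝ᵥ J'R.mulVec (fun i => (β i : ℝ)) ≠ 0} with hV'def
  -- the isometry identifies V' with V
  have key : ∀ x : Fin 22 → ℝ, (A *ᵥ x) ∈ V ↔ x ∈ V' := by
    intro x
    constructor
    · rintro ⟨hq, hw⟩
      refine ⟨by rw [← pair_aux JR J'R A hIsoR x x]; exact hq, ?_⟩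
      intro β hβ
      have hγsq : (M *ᵥ β) ⬝ᵥ J *ᵥ (M *ᵥ β) = -2 := by
        rw [pair_aux J J' M hMisom β β]; exact hβ
      have hAβ : A *ᵥ (fun i => ((β i : ℝ))) = (fun i => (((M *ᵥ β) i : ℝ))) :=
        (cast_mulVec M β).symm
      rw [← pair_aux JR J'R A hIsoR x (fun i => ((β i : ℝ))), hAβ]
      exact hw (M *ᵥ β) hγsq
    · rintro ⟨hq, hw⟩
      refine ⟨by rw [pair_aux JR J'R A hIsoR x x]; exact hq, ?_⟩
      intro β hβ
      have hMγ : M *ᵥ (N *ᵥ β) = β := by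
        rw [Matrix.mulVec_mulVec, hMN, Matrix.one_mulVec]
      have hγsq : (N *ᵥ β) ⬝ᵥ J' *ᵥ (N *ᵥ β) = -2 := by
        rw [← pair_aux J J' M hMisom (N *ᵥ β) (N *ᵥ β), hMγ]; exact hβ
      have hβR : (fun i => ((β i : ℝ))) = A *ᵥ (fun i => (((N *ᵥ β) i : ℝ))) := by
        conv_lhs => rw [← hMγ]
        exact cast_mulVec M (N *ᵥ β)
      rw [hβR, pair_aux JR J'R A hIsoR x (fun i => (((N *ᵥ β) i : ℝ)))]
      exact hw (N *ᵥ β) hγsq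
  -- continuity / homeomorphism
  have contA : Continuous fun x : Fin 22 → ℝ => A *ᵥ x :=
    A.mulVecLin.continuous_of_finiteDimensional
  have contB : Continuous fun x : Fin 22 → ℝ => B *ᵥ x :=
    B.mulVecLin.continuous_of_finiteDimensional
  let e : (Fin 22 → ℝ) ≃ₜ (Fin 22 → ℝ) :=
    { toFun := fun x => A *ᵥ x
      invFun := fun x => B *ᵥ x
      left_inv := fun x => by
        show B *ᵥ (A *ᵥ x) = x
        rw [Matrix.mulVec_mulVec, hBA, Matrix.one_mulVec]
      right_inv := fun x => by
        show A *ᵥ (B *ᵥ x) = x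
        rw [Matrix.mulVec_mulVec, hAB, Matrix.one_mulVec]
      continuous_toFun := contA
      continuous_invFun := contB }
  have he : ⇑e = fun x => A *ᵥ x := rfl
  -- the image of V' is V
  have himg : (fun x => A *ᵥ x) '' V' = V := by
    ext y
    constructor
    · rintro ⟨x, hx, rfl⟩
      exact (key x).2 hx
    · intro hy
      have hABy : A *ᵥ (B *ᵥ y) = y := by
        rw [Matrix.mulVec_mulVec, hAB, Matrix.one_mulVec]
      exact ⟨B *ᵥ y, (key (B *ᵥ y)).1 (by rw [hABy]; exact hy), hABy⟩
  -- identify the polarizing class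
  set ξR : Fin 22 → ℝ := fun i => ((ξ i : ℝ)) with hξRdef
  have hcast : (fun i => (((M.map (Int.cast : ℤ → ℚ)).mulVec ξ) i : ℝ)) = A *ᵥ ξR := by
    funext i
    simp only [Matrix.mulVec, dotProduct, Matrix.map_apply, hAdef, hξRdef]
    push_cast
    ring
  rw [hcast] at hξ
  have hAmp'eq : Amp' = connectedComponentIn V' ξR := hAmp' ξR hξ'
  have hAmpeq : Amp = connectedComponentIn V (A *ᵥ ξR) := hAmp (A *ᵥ ξR) hξ
  have hξ'V : ξR ∈ V' := by
    have : ξR ∈ connectedComponentIn V' ξR := hAmp'eq ▸ hξ'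
    exact connectedComponentIn_subset V' ξR this
  apply hOgus M hMdet hMisom
  rw [hAmp'eq, hAmpeq]
  have himage := e.image_connectedComponentIn (s := V') (x := ξR) hξ'V
  rw [he, himg] at himage
  exact himage
end

section
/- Let k ⊂ C and let X be a complex algebraic K3 surface with transcendental lattice T(X)_Q and E = End_Hdg(T(X)_Q) a CM field with dim_E T(X)_Q = 1 (i.e., X has CM). Suppose τ' is a Hodge isometry generating E over Q, extended to τ̃' ∈ End_Hdg(P²(X,Q)) fixing Hodge classes. If Y is another K3 surface with an isometry P²(Y,Q) ⊗ A_f ≅ P²(X,Q) ⊗ A_f carrying a Hodge endomorphism τ̃ of P²(Y,Q) to τ̃' and restricting to T(Y) ⊗ A_f ≅ T(X) ⊗ A_f, then Q(τ) ≅ Q(τ'), dim_{Q(τ)} T(Y)_Q = 1, and hence Y has CM. -/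
/-!
STATEMENT 18: Let `X` be a complex algebraic K3 surface with CM: `E = End_Hdg(T(X)_ℚ)` is
a CM field with `dim_E T(X)_ℚ = 1`, generated over `ℚ` by a Hodge isometry `τ'`, extended
to `τ̃' ∈ End_Hdg(P²(X,ℚ))` fixing Hodge classes.  If `Y` is another K3 surface with an
isometry `P²(Y,ℚ) ⊗ A_f ≅ P²(X,ℚ) ⊗ A_f` carrying a Hodge endomorphism `τ̃` of `P²(Y,ℚ)`
to `τ̃'` and restricting to `T(Y) ⊗ A_f ≅ T(X) ⊗ A_f`, then `ℚ(τ) ≅ ℚ(τ')`,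
`dim_{ℚ(τ)} T(Y)_ℚ = 1`, and hence `Y` has CM.

Model: `PX, PY` are the primitive cohomologies (finite-dimensional `ℚ`-quadratic spaces),
`TX ⊆ PX`, `TY ⊆ PY` the transcendental parts, `A` a nonzero commutative `ℚ`-algebra
playing the role of `A_f`.  "`Y` has CM" is rendered via Zarhin's criterion: `ℚ(τ)` is a
CM field (witnessed by an involution `ρ` intertwined with complex conjugation by every
complex embedding, transported from `E` through the isomorphism) together with
`dim_{ℚ(τ)} T(Y)_ℚ = 1`.
-/

open TensorProduct

open Polynomial


section AuxCM

variable {V W : Type*} [AddCommGroup V] [Module ℚ V] [AddCommGroup W] [Module ℚ W]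

lemma auxCM_aeval_restrict {T : Submodule ℚ V} (σ : Module.End ℚ V)
    (h : ∀ x ∈ T, σ x ∈ T) (p : ℚ[X]) (y : T) :
    ((Polynomial.aeval (σ.restrict h) p y : T) : V) = Polynomial.aeval σ p (y : V) := by
  induction p using Polynomial.induction_on' with
  | add p q hp hq => simp [hp, hq]
  | monomial n a =>
      rw [Polynomial.aeval_monomial, Polynomial.aeval_monomial, Module.End.pow_restrict]
      simp [Module.End.mul_apply, Module.algebraMap_end_apply, LinearMap.restrict_coe_apply]

lemma auxCM_one_tmul_injective (A : Type*) [CommRing A] [Algebra ℚ A] [Nontrivial A]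
    {v : V} (hv : (1 : A) ⊗ₜ[ℚ] v = 0) : v = 0 := by
  have hinj : Function.Injective (Algebra.linearMap ℚ A) := (algebraMap ℚ A).injective
  have h2 : Function.Injective (LinearMap.rTensor V (Algebra.linearMap ℚ A)) :=
    Module.Flat.rTensor_preserves_injective_linearMap _ hinj
  have h3 : (LinearMap.rTensor V (Algebra.linearMap ℚ A)) ((1:ℚ) ⊗ₜ[ℚ] v) = 0 := by
    rw [LinearMap.rTensor_tmul]
    simpa using hv
  have h4 : ((1:ℚ) ⊗ₜ[ℚ] v : ℚ ⊗[ℚ] V) = 0 := h2 (by rw [h3, map_zero])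
  have := congrArg (TensorProduct.lid ℚ V) h4
  simpa using this

lemma auxCM_transfer (TV : Submodule ℚ V) (TW : Submodule ℚ W)
    (σV : Module.End ℚ V) (σW : Module.End ℚ W)
    (hV : ∀ x ∈ TV, σV x ∈ TV) (hW : ∀ x ∈ TW, σW x ∈ TW)
    (A : Type*) [CommRing A] [Algebra ℚ A] [Nontrivial A]
    (g : (A ⊗[ℚ] V) ≃ₗ[A] (A ⊗[ℚ] W))
    (hgτ : ∀ x, g ((σV.baseChange A) x) = (σW.baseChange A) (g x))
    (hgT : ∀ u ∈ LinearMap.range (TV.subtype.baseChange A),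
      g u ∈ LinearMap.range (TW.subtype.baseChange A))
    (p : ℚ[X]) (hp : Polynomial.aeval (σW.restrict hW) p = 0) :
    Polynomial.aeval (σV.restrict hV) p = 0 := by
  let c : Module.End A (A ⊗[ℚ] V) ≃ₐ[A] Module.End A (A ⊗[ℚ] W) :=
    AlgEquiv.ofLinearEquiv g.conj (by simp [Module.End.one_eq_id])
      (fun f₁ f₂ => by
        simpa [Module.End.mul_eq_comp] using g.conj_comp f₂ f₁)
  have hc : c (σV.baseChange A) = σW.baseChange A := by
    apply LinearMap.ext
    intro x
    show g.conj (σV.baseChange A) x = _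
    rw [LinearEquiv.conj_apply_apply, hgτ, g.apply_symm_apply]
  have h1 : Polynomial.aeval (σV.baseChange A) p
      = (Polynomial.aeval σV p).baseChange A := by
    exact (Polynomial.aeval_algHom_apply (Module.End.baseChangeHom ℚ A V) σV p)
  have h1W : Polynomial.aeval (σW.baseChange A) p
      = (Polynomial.aeval σW p).baseChange A := by
    exact (Polynomial.aeval_algHom_apply (Module.End.baseChangeHom ℚ A W) σW p)
  have h2 : Polynomial.aeval (σW.baseChange A) p
      = (c.toAlgHom.restrictScalars ℚ) (Polynomial.aeval (σV.baseChange A) p) := by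
    have h2' := Polynomial.aeval_algHom_apply (c.toAlgHom.restrictScalars ℚ)
      (σV.baseChange A) p
    rw [show ((c.toAlgHom.restrictScalars ℚ) (σV.baseChange A)) = σW.baseChange A
      from hc] at h2'
    exact h2'
  have hWkill : (Polynomial.aeval σW p) ∘ₗ TW.subtype = 0 := by
    apply LinearMap.ext
    intro y
    have := auxCM_aeval_restrict σW hW p y
    rw [hp] at this
    simpa using this.symm
  have key : ∀ y : TV, (Polynomial.aeval σV p) (y : V) = 0 := by
    intro y
    set u : A ⊗[ℚ] V := (TV.subtype.baseChange A) ((1:A) ⊗ₜ[ℚ] y) with hu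
    have hmem : u ∈ LinearMap.range (TV.subtype.baseChange A) := ⟨_, rfl⟩
    obtain ⟨w, hw⟩ := hgT u hmem
    have hz : (Polynomial.aeval (σW.baseChange A) p) (g u) = 0 := by
      rw [← hw, h1W]
      calc ((Polynomial.aeval σW p).baseChange A) ((TW.subtype.baseChange A) w)
          = ((Polynomial.aeval σW p).baseChange A ∘ₗ TW.subtype.baseChange A) w := rfl
        _ = (((Polynomial.aeval σW p) ∘ₗ TW.subtype).baseChange A) w := by
            rw [← LinearMap.baseChange_comp]
        _ = 0 := by rw [hWkill]; simp
    have hz2 : g ((Polynomial.aeval (σV.baseChange A) p) u) = 0 := by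
      have : (Polynomial.aeval (σW.baseChange A) p) (g u)
          = g ((Polynomial.aeval (σV.baseChange A) p) (g.symm (g u))) := by
        rw [h2]; rfl
      rw [this, g.symm_apply_apply] at hz
      exact hz
    have hz3 : (Polynomial.aeval (σV.baseChange A) p) u = 0 := by
      apply g.injective
      rw [hz2, map_zero]
    rw [h1] at hz3
    have : (1:A) ⊗ₜ[ℚ] ((Polynomial.aeval σV p) (y : V)) = 0 := by
      have hu' : u = (1:A) ⊗ₜ[ℚ] (y : V) := by rw [hu]; rfl
      rw [← hz3, hu']
      simp [LinearMap.baseChange_tmul]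
    exact auxCM_one_tmul_injective A this
  apply LinearMap.ext
  intro y
  apply Subtype.ext
  rw [auxCM_aeval_restrict σV hV p y, key y]
  rfl

end AuxCM

set_option maxHeartbeats 1000000 in
set_option synthInstance.maxHeartbeats 400000 in
theorem CM_descends_along_adelic_comparison
    (PX PY : Type*) [AddCommGroup PX] [Module ℚ PX] [AddCommGroup PY] [Module ℚ PY]
    [FiniteDimensional ℚ PX] [FiniteDimensional ℚ PY]
    (QX : QuadraticForm ℚ PX) (QY : QuadraticForm ℚ PY)
    (TX : Submodule ℚ PX) (TY : Submodule ℚ PY)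
    (τ' : Module.End ℚ PX) (τ : Module.End ℚ PY)
    -- τ', τ stabilize the transcendental parts
    (hτ'T : ∀ x ∈ TX, τ' x ∈ TX) (hτT : ∀ y ∈ TY, τ y ∈ TY)
    -- τ' is an isometry generating the CM field E = End_Hdg(T(X)_ℚ) = ℚ(τ'|_TX)
    (hτ'isom : ∀ x : PX, QX (τ' x) = QX x)
    -- E := ℚ(τ'), restricted to TX, is a CM field with dim_E TX = 1:
    (hEfield : IsField (Algebra.adjoin ℚ ({τ'.restrict hτ'T} : Set (Module.End ℚ TX))))
    (hECM : ∃ ρ : (Algebra.adjoin ℚ ({τ'.restrict hτ'T} : Set (Module.End ℚ TX))) ≃ₐ[ℚ]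
        (Algebra.adjoin ℚ ({τ'.restrict hτ'T} : Set (Module.End ℚ TX))),
      ρ ≠ AlgEquiv.refl ∧ ρ.trans ρ = AlgEquiv.refl ∧
      ∀ φ : (Algebra.adjoin ℚ ({τ'.restrict hτ'T} : Set (Module.End ℚ TX))) →ₐ[ℚ] ℂ,
        ∀ x, φ (ρ x) = starRingEnd ℂ (φ x))
    (hdimE : ∀ v : TX, v ≠ 0 → ∀ w : TX,
      ∃ f ∈ Algebra.adjoin ℚ ({τ'.restrict hτ'T} : Set (Module.End ℚ TX)), f v = w)
    -- the finite adeles, modelled as a nonzero commutative ℚ-algebra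
    (A : Type*) [CommRing A] [Algebra ℚ A] [Nontrivial A]
    -- the adelic isometry P²(Y) ⊗ A_f ≅ P²(X) ⊗ A_f
    (g : (A ⊗[ℚ] PY) ≃ₗ[A] (A ⊗[ℚ] PX))
    (hgisom : ∀ x : A ⊗[ℚ] PY, (QX.baseChange A) (g x) = (QY.baseChange A) x)
    -- g carries τ̃ to τ̃'
    (hgτ : ∀ x : A ⊗[ℚ] PY, g ((τ.baseChange A) x) = (τ'.baseChange A) (g x))
    -- g restricts to an isomorphism T(Y) ⊗ A_f ≅ T(X) ⊗ A_f
    (hgT : Submodule.map g.toLinearMap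
        (LinearMap.range (TY.subtype.baseChange A)) =
      LinearMap.range (TX.subtype.baseChange A)) :
    -- conclusion: ℚ(τ) ≅ ℚ(τ'), dim_{ℚ(τ)} T(Y)_ℚ = 1, and (with the transported CM
    -- involution) Y has CM
    Nonempty ((Algebra.adjoin ℚ ({τ.restrict hτT} : Set (Module.End ℚ TY))) ≃ₐ[ℚ]
        (Algebra.adjoin ℚ ({τ'.restrict hτ'T} : Set (Module.End ℚ TX)))) ∧
    (∀ v : TY, v ≠ 0 → ∀ w : TY,
      ∃ f ∈ Algebra.adjoin ℚ ({τ.restrict hτT} : Set (Module.End ℚ TY)), f v = w) ∧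
    IsField (Algebra.adjoin ℚ ({τ.restrict hτT} : Set (Module.End ℚ TY))) ∧
    (∃ ρ : (Algebra.adjoin ℚ ({τ.restrict hτT} : Set (Module.End ℚ TY))) ≃ₐ[ℚ]
        (Algebra.adjoin ℚ ({τ.restrict hτT} : Set (Module.End ℚ TY))),
      ρ ≠ AlgEquiv.refl ∧ ρ.trans ρ = AlgEquiv.refl ∧
      ∀ φ : (Algebra.adjoin ℚ ({τ.restrict hτT} : Set (Module.End ℚ TY))) →ₐ[ℚ] ℂ,
        ∀ x, φ (ρ x) = starRingEnd ℂ (φ x)) := by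

  classical
  set s := τ.restrict hτT with hs
  set t := τ'.restrict hτ'T with ht
  -- g and g.symm preserve the transcendental parts
  have hgT1 : ∀ u ∈ LinearMap.range (TY.subtype.baseChange A),
      g u ∈ LinearMap.range (TX.subtype.baseChange A) := by
    intro u hu
    rw [← hgT]
    exact Submodule.mem_map_of_mem hu
  have hgT2 : ∀ u ∈ LinearMap.range (TX.subtype.baseChange A),
      g.symm u ∈ LinearMap.range (TY.subtype.baseChange A) := by
    intro u hu
    rw [← hgT] at hu
    obtain ⟨w, hw, rfl⟩ := hu
    simpa using hw
  have hgτ2 : ∀ x, g.symm ((τ'.baseChange A) x) = (τ.baseChange A) (g.symm x) := by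
    intro x
    apply g.injective
    rw [g.apply_symm_apply, hgτ, g.apply_symm_apply]
  -- the annihilating polynomials of s and t coincide
  have key : ∀ p : ℚ[X], Polynomial.aeval s p = 0 ↔ Polynomial.aeval t p = 0 := by
    intro p
    constructor
    · intro h
      exact auxCM_transfer TX TY τ' τ hτ'T hτT A g.symm hgτ2 hgT2 p h
    · intro h
      exact auxCM_transfer TY TX τ τ' hτT hτ'T A g hgτ hgT1 p h
  have hker : RingHom.ker ((Polynomial.aeval s : ℚ[X] →ₐ[ℚ] Module.End ℚ TY))
      = RingHom.ker ((Polynomial.aeval t : ℚ[X] →ₐ[ℚ] Module.End ℚ TX)) := by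
    ext p
    simp only [RingHom.mem_ker]
    exact key p
  -- the algebra isomorphism ℚ(τ) ≃ ℚ(τ')
  let eY := Ideal.quotientKerEquivRange (R := ℚ) (Polynomial.aeval s)
  let eX := Ideal.quotientKerEquivRange (R := ℚ) (Polynomial.aeval t)
  let eK : (Algebra.adjoin ℚ ({s} : Set (Module.End ℚ TY))) ≃ₐ[ℚ]
      (Algebra.adjoin ℚ ({t} : Set (Module.End ℚ TX))) :=
    ((Subalgebra.equivOfEq _ _ (Algebra.adjoin_singleton_eq_range_aeval ℚ s)).trans
      (eY.symm.trans ((Ideal.quotientEquivAlgOfEq ℚ hker).trans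
        (eX.trans (Subalgebra.equivOfEq _ _
          (Algebra.adjoin_singleton_eq_range_aeval ℚ t).symm)))))
  -- dimension bookkeeping
  have hinjY : Function.Injective (TY.subtype.baseChange A) := by
    rw [LinearMap.baseChange_eq_ltensor]
    exact Module.Flat.lTensor_preserves_injective_linearMap _ TY.injective_subtype
  have hinjX : Function.Injective (TX.subtype.baseChange A) := by
    rw [LinearMap.baseChange_eq_ltensor]
    exact Module.Flat.lTensor_preserves_injective_linearMap _ TX.injective_subtype
  let e1Y := LinearEquiv.ofInjective (TY.subtype.baseChange A) hinjY
  let e1X := LinearEquiv.ofInjective (TX.subtype.baseChange A) hinjX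
  let e2 := LinearEquiv.ofSubmodules g _ _ hgT
  let eAll : (A ⊗[ℚ] TY) ≃ₗ[A] (A ⊗[ℚ] TX) := e1Y.trans (e2.trans e1X.symm)
  have hbY : Module.finrank A (A ⊗[ℚ] TY) = Module.finrank ℚ TY := by
    rw [Module.finrank_eq_card_basis ((Module.finBasis ℚ TY).baseChange A)]
    simp
  have hbX : Module.finrank A (A ⊗[ℚ] TX) = Module.finrank ℚ TX := by
    rw [Module.finrank_eq_card_basis ((Module.finBasis ℚ TX).baseChange A)]
    simp
  have hdim : Module.finrank ℚ TY = Module.finrank ℚ TX := by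
    rw [← hbY, ← hbX, LinearEquiv.finrank_eq eAll]
  -- TX (hence TY) is nontrivial
  obtain ⟨⟨x0, y0, hxy0⟩, hEcomm, hEinv⟩ := hEfield
  have hTXnt : Nontrivial TX := by
    by_contra hcon
    rw [not_nontrivial_iff_subsingleton] at hcon
    exact hxy0 (Subtype.ext (LinearMap.ext fun v => Subsingleton.elim _ _))
  obtain ⟨v₀, hv₀⟩ := exists_ne (0 : TX)
  -- E ≃ TX as ℚ-vector spaces, via evaluation at v₀
  let LE : (Algebra.adjoin ℚ ({t} : Set (Module.End ℚ TX))) →ₗ[ℚ] TX :=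
    { toFun := fun f => (f : Module.End ℚ TX) v₀
      map_add' := fun f g => by simp
      map_smul' := fun a f => by simp }
  have hLEinj : Function.Injective LE := by
    intro f0 f0' hff'
    by_contra hne'
    set f := f0 - f0' with hfdef
    have hne : f ≠ 0 := sub_ne_zero.mpr hne'
    obtain ⟨u, hu⟩ := hEinv hne
    have h1 : (f : Module.End ℚ TX) v₀ = 0 := by
      have : LE f = 0 := by rw [hfdef, map_sub LE f0 f0', hff', sub_self]
      exact this
    have h2 : ((u * f : Algebra.adjoin ℚ ({t} : Set (Module.End ℚ TX)))
        : Module.End ℚ TX) v₀ = v₀ := by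
      rw [hEcomm u f, hu]
      simp
    have h3 : ((u * f : Algebra.adjoin ℚ ({t} : Set (Module.End ℚ TX)))
        : Module.End ℚ TX) v₀
        = (u : Module.End ℚ TX) ((f : Module.End ℚ TX) v₀) := by
      simp [Module.End.mul_apply]
    rw [h3, h1, map_zero] at h2
    exact hv₀ h2.symm
  have hLEsurj : Function.Surjective LE := by
    intro w
    obtain ⟨f, hf, hfv⟩ := hdimE v₀ hv₀ w
    exact ⟨⟨f, hf⟩, hfv⟩
  have hdimETX : Module.finrank ℚ (Algebra.adjoin ℚ ({t} : Set (Module.End ℚ TX)))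
      = Module.finrank ℚ TX :=
    LinearEquiv.finrank_eq (LinearEquiv.ofBijective LE ⟨hLEinj, hLEsurj⟩)
  -- reconstitute hEfield
  have hEfield' : IsField (Algebra.adjoin ℚ ({t} : Set (Module.End ℚ TX))) :=
    ⟨⟨x0, y0, hxy0⟩, hEcomm, hEinv⟩
  -- transfer the field property
  have hKfield : IsField (Algebra.adjoin ℚ ({s} : Set (Module.End ℚ TY))) :=
    eK.toMulEquiv.isField hEfield'
  have hdimKE : Module.finrank ℚ (Algebra.adjoin ℚ ({s} : Set (Module.End ℚ TY)))
      = Module.finrank ℚ (Algebra.adjoin ℚ ({t} : Set (Module.End ℚ TX))) :=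
    LinearEquiv.finrank_eq eK.toLinearEquiv
  -- dimension 1 over ℚ(τ)
  have hdim1 : ∀ v : TY, v ≠ 0 → ∀ w : TY,
      ∃ f ∈ Algebra.adjoin ℚ ({s} : Set (Module.End ℚ TY)), f v = w := by
    intro v hv w
    let LK : (Algebra.adjoin ℚ ({s} : Set (Module.End ℚ TY))) →ₗ[ℚ] TY :=
      { toFun := fun f => (f : Module.End ℚ TY) v
        map_add' := fun f g => by simp
        map_smul' := fun a f => by simp }
    have hLKinj : Function.Injective LK := by
      intro f0 f0' hff'
      by_contra hne'
      set f := f0 - f0' with hfdef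
      have hne : f ≠ 0 := sub_ne_zero.mpr hne'
      obtain ⟨u, hu⟩ := hKfield.mul_inv_cancel hne
      have h1 : (f : Module.End ℚ TY) v = 0 := by
        have : LK f = 0 := by rw [hfdef, map_sub LK f0 f0', hff', sub_self]
        exact this
      have h2 : ((u * f : Algebra.adjoin ℚ ({s} : Set (Module.End ℚ TY)))
          : Module.End ℚ TY) v = v := by
        rw [hKfield.mul_comm u f, hu]
        simp
      have h3 : ((u * f : Algebra.adjoin ℚ ({s} : Set (Module.End ℚ TY)))
          : Module.End ℚ TY) v
          = (u : Module.End ℚ TY) ((f : Module.End ℚ TY) v) := by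
        simp [Module.End.mul_apply]
      rw [h3, h1, map_zero] at h2
      exact hv h2.symm
    have hfr : Module.finrank ℚ (Algebra.adjoin ℚ ({s} : Set (Module.End ℚ TY)))
        = Module.finrank ℚ TY := by
      rw [hdimKE, hdimETX, ← hdim]
    have hLKsurj : Function.Surjective LK := by
      haveI : FiniteDimensional ℚ (Algebra.adjoin ℚ ({s} : Set (Module.End ℚ TY))) :=
        Module.Finite.of_injective (Algebra.adjoin ℚ ({s} : Set (Module.End ℚ TY))).val.toLinearMap
          Subtype.val_injective
      rw [← LinearMap.range_eq_top]
      apply Submodule.eq_top_of_finrank_eq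
      rw [LinearMap.finrank_range_of_inj hLKinj, hfr]
    obtain ⟨f, hf⟩ := hLKsurj w
    exact ⟨(f : Module.End ℚ TY), f.2, hf⟩
  -- transport the CM involution
  obtain ⟨ρ', hρ1, hρ2, hρ3⟩ := hECM
  refine ⟨⟨eK⟩, hdim1, hKfield, (eK.trans ρ').trans eK.symm, ?_, ?_, ?_⟩
  · intro hcon
    apply hρ1
    apply AlgEquiv.ext
    intro x
    have := DFunLike.congr_fun hcon (eK.symm x)
    simp only [AlgEquiv.trans_apply, AlgEquiv.apply_symm_apply, AlgEquiv.coe_refl, id_eq] at this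
    have := congrArg eK this
    simpa using this
  · apply AlgEquiv.ext
    intro x
    have h2 := DFunLike.congr_fun hρ2 (eK x)
    simp only [AlgEquiv.trans_apply, AlgEquiv.coe_refl, id_eq] at h2 ⊢
    rw [AlgEquiv.apply_symm_apply, h2, AlgEquiv.symm_apply_apply]
  · intro φ x
    have := hρ3 (φ.comp eK.symm.toAlgHom) (eK x)
    simpa using this
end
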